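/- arXiv:1405.1787 — 6 statements merged into one kernel-verified Lean document; each statement's English description precedes it below -/
import Mathlib

section
/- Let v₀ : ℝ² → ℝ be a nonnegative Borel function with v₀(x) ≤ α₁ e^{−α₂|x|} for constants α₁, α₂ > 0, and let v̂₀ denote its Fourier transform. Then for every a ∈ ℝ² and every p ∈ ℝ², |v̂₀(p + a) − v̂₀(p − a)| ≤ min(1, |a|) · |f̂_a(p)|, where f_a(x) = −2 min(1,|a|)^{−1} sin(a·x) v₀(x) is an L² function whose L² norm is bounded uniformly in a. -/
open MeasureTheory Real

/-! The modulation identity `e^{-i(p±a)·x} = e^{-ip·x} e^{∓ia·x}` shows that `v̂₀(p+a) − v̂₀(p−a)`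
is the transform of `−2i sin(a·x) v₀(x) = i min(1,|a|) f_a(x)`; the exponential decay makes `v₀`
integrable, so both transforms may be taken under one integral. Since
`|sin(a·x)| ≤ min(1,|a|) (1+|x|)`, every `f_a` is dominated by `2α₁ (1+|x|) e^{−α₂|x|}`, which is
square integrable because exponential decay beats any power of `1 + |x|`. -/

lemma one_add_pow_le_mul_exp {c : ℝ} (hc : 0 < c) (n : ℕ) {r : ℝ} (hr : 0 ≤ r) :
    (1 + r) ^ n ≤ n.factorial * exp c / c ^ n * exp (c * r) := by
  have h := pow_div_factorial_le_exp (x := c * (1 + r)) (by positivity) n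
  rw [div_le_iff₀ (by positivity), mul_pow, mul_add, mul_one, exp_add] at h
  rw [div_mul_eq_mul_div, le_div_iff₀ (by positivity)]
  linarith

section ExponentialDecay

variable {E : Type*} [NormedAddCommGroup E] [NormedSpace ℝ E] [FiniteDimensional ℝ E]
  [MeasurableSpace E] [BorelSpace E] {μ : Measure E} [μ.IsAddHaarMeasure]

open Module in
lemma integrable_one_add_norm_pow_mul_exp_neg {c : ℝ} (hc : 0 < c) (n : ℕ) :
    Integrable (fun x : E => (1 + ‖x‖) ^ n * exp (-c * ‖x‖)) μ := by
  set k := finrank ℝ E + 1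
  have hk : (finrank ℝ E : ℝ) < (k : ℕ) := by push_cast [k]; linarith
  set C := (n + k).factorial * exp c / c ^ (n + k)
  refine ((integrable_one_add_norm hk).const_mul C).mono' (by fun_prop) (.of_forall fun x => ?_)
  have h1 : 0 < 1 + ‖x‖ := by positivity
  have hpow := one_add_pow_le_mul_exp hc (n + k) (norm_nonneg x)
  rw [Real.rpow_neg h1.le, Real.rpow_natCast, ← div_eq_mul_inv, le_div_iff₀ (by positivity),
    norm_of_nonneg (by positivity)]
  calc (1 + ‖x‖) ^ n * exp (-c * ‖x‖) * (1 + ‖x‖) ^ k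
      = (1 + ‖x‖) ^ (n + k) * exp (-c * ‖x‖) := by ring
    _ ≤ C * exp (c * ‖x‖) * exp (-c * ‖x‖) := by gcongr
    _ = C := by rw [mul_assoc, ← exp_add]; simp

lemma memLp_two_one_add_norm_mul_exp_neg {c : ℝ} (hc : 0 < c) :
    MemLp (fun x : E => (1 + ‖x‖) * exp (-c * ‖x‖)) 2 μ := by
  refine (memLp_two_iff_integrable_sq (by fun_prop)).2 ?_
  refine (integrable_one_add_norm_pow_mul_exp_neg (μ := μ) (mul_pos two_pos hc) 2).congr
    (.of_forall fun x => ?_)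
  dsimp only
  rw [mul_pow, ← exp_nat_mul]
  ring_nf

end ExponentialDecay

lemma abs_sin_inner_le {E : Type*} [NormedAddCommGroup E] [InnerProductSpace ℝ E] (a x : E) :
    |sin (inner ℝ a x)| ≤ min 1 ‖a‖ * (1 + ‖x‖) := by
  rcases le_total ‖a‖ 1 with ha | ha
  · rw [min_eq_right ha]
    calc |sin (inner ℝ a x)| ≤ |inner ℝ a x| := abs_sin_le_abs
      _ ≤ ‖a‖ * ‖x‖ := abs_real_inner_le_norm a x
      _ ≤ ‖a‖ * (1 + ‖x‖) := by gcongr; linarith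
  · rw [min_eq_left ha, one_mul]
    linarith [abs_sin_le_one (inner ℝ a x), norm_nonneg x]

lemma abs_neg_two_mul_inv_min_mul_sin_inner_mul_le {E : Type*} [NormedAddCommGroup E]
    [InnerProductSpace ℝ E] {a : E} (ha : a ≠ 0) (x : E) {v : ℝ} (hv : 0 ≤ v) :
    |-2 * (min 1 ‖a‖)⁻¹ * sin (inner ℝ a x) * v| ≤ 2 * (1 + ‖x‖) * v := by
  have hm : 0 < min 1 ‖a‖ := lt_min one_pos (norm_pos_iff.2 ha)
  have hsin : (min 1 ‖a‖)⁻¹ * |sin (inner ℝ a x)| ≤ 1 + ‖x‖ :=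
    (inv_mul_le_iff₀ hm).2 (abs_sin_inner_le a x)
  rw [abs_mul, abs_mul, abs_mul, abs_of_nonneg hv, abs_of_pos (inv_pos.2 hm), abs_neg, abs_two,
    mul_assoc 2]
  gcongr

/-- Fourier transform on ℝ² with the normalization `(2π)⁻¹ ∫ e^{-i p·x} f(x) dx`. -/
noncomputable def FT (f : EuclideanSpace ℝ (Fin 2) → ℂ)
    (p : EuclideanSpace ℝ (Fin 2)) : ℂ :=
  (2 * Real.pi)⁻¹ * ∫ x : EuclideanSpace ℝ (Fin 2),
    Complex.exp (-Complex.I * ((inner ℝ p x : ℝ) : ℂ)) * f x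

lemma integrable_cexp_neg_I_inner_mul {E : Type*} [NormedAddCommGroup E] [InnerProductSpace ℝ E]
    [MeasurableSpace E] [OpensMeasurableSpace E] {μ : Measure E} {g : E → ℂ}
    (hg : Integrable g μ) (p : E) :
    Integrable (fun x => Complex.exp (-Complex.I * (inner ℝ p x : ℝ)) * g x) μ := by
  refine hg.bdd_mul (c := 1) (by fun_prop) (.of_forall fun x => ?_)
  rw [Complex.norm_exp]
  simp

lemma cexp_neg_I_inner_add_sub_sub {E : Type*} [NormedAddCommGroup E] [InnerProductSpace ℝ E]
    (p a x : E) :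
    Complex.exp (-Complex.I * (inner ℝ (p + a) x : ℝ))
      - Complex.exp (-Complex.I * (inner ℝ (p - a) x : ℝ))
      = -2 * Complex.I * Complex.sin (inner ℝ a x : ℝ) *
        Complex.exp (-Complex.I * (inner ℝ p x : ℝ)) := by
  simp only [inner_add_left, inner_sub_left, Complex.ofReal_add, Complex.ofReal_sub]
  generalize ((inner ℝ p x : ℝ) : ℂ) = s
  generalize ((inner ℝ a x : ℝ) : ℂ) = t
  have hsin : -2 * Complex.I * Complex.sin t
      = Complex.exp (-t * Complex.I) - Complex.exp (t * Complex.I) := by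
    linear_combination (-Complex.I) * Complex.two_sin t
      - (Complex.exp (-t * Complex.I) - Complex.exp (t * Complex.I)) * Complex.I_sq
  rw [hsin, sub_mul, ← Complex.exp_add, ← Complex.exp_add]
  ring_nf

lemma FT_const_mul (c : ℂ) (g : EuclideanSpace ℝ (Fin 2) → ℂ) (p : EuclideanSpace ℝ (Fin 2)) :
    FT (fun x => c * g x) p = c * FT g p := by
  simp only [FT, mul_left_comm _ c, integral_const_mul]

lemma FT_add_sub_FT_sub {g : EuclideanSpace ℝ (Fin 2) → ℂ} (hg : Integrable g)
    (p a : EuclideanSpace ℝ (Fin 2)) :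
    FT g (p + a) - FT g (p - a)
      = FT (fun x => -2 * Complex.I * Complex.sin (inner ℝ a x : ℝ) * g x) p := by
  simp only [FT, ← mul_sub, ← integral_sub (integrable_cexp_neg_I_inner_mul hg _)
    (integrable_cexp_neg_I_inner_mul hg _), ← sub_mul, cexp_neg_I_inner_add_sub_sub]
  congr 1
  refine integral_congr_ae (.of_forall fun x => ?_)
  ring

theorem stmt4_general (v₀ : EuclideanSpace ℝ (Fin 2) → ℝ) (hmeas : Measurable v₀)
    (hpos : ∀ x, 0 ≤ v₀ x) (α₁ α₂ : ℝ) (hα₂ : 0 < α₂)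
    (hdecay : ∀ x, v₀ x ≤ α₁ * Real.exp (-α₂ * ‖x‖))
    (f : EuclideanSpace ℝ (Fin 2) → EuclideanSpace ℝ (Fin 2) → ℝ)
    (hf : ∀ a x, f a x = -2 * (min 1 ‖a‖)⁻¹ * Real.sin (inner ℝ a x : ℝ) * v₀ x) :
    (∀ a : EuclideanSpace ℝ (Fin 2), a ≠ 0 → ∀ p : EuclideanSpace ℝ (Fin 2),
      ‖FT (fun x => (v₀ x : ℂ)) (p + a) - FT (fun x => (v₀ x : ℂ)) (p - a)‖ ≤
        min 1 ‖a‖ * ‖FT (fun x => (f a x : ℂ)) p‖) ∧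
    (∃ C : ℝ, ∀ a : EuclideanSpace ℝ (Fin 2), a ≠ 0 →
      MemLp (fun x => f a x) 2 volume ∧
      eLpNorm (fun x => f a x) 2 volume ≤ ENNReal.ofReal C) := by
  refine ⟨fun a ha p => ?_, ?_⟩
  · have hv₀ : Integrable (fun x => (v₀ x : ℂ)) := by
      refine ((integrable_one_add_norm_pow_mul_exp_neg hα₂ 0).const_mul α₁).mono'
        (by fun_prop) (.of_forall fun x => ?_)
      simpa [abs_of_nonneg (hpos x)] using hdecay x
    have hm : 0 < min 1 ‖a‖ := lt_min one_pos (norm_pos_iff.2 ha)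
    have hfa : ∀ x, -2 * Complex.I * Complex.sin (inner ℝ a x : ℝ) * (v₀ x : ℂ)
        = Complex.I * (min 1 ‖a‖ : ℝ) * (f a x : ℂ) := fun x => by
      rw [hf]
      push_cast
      field_simp [hm.ne']
    rw [FT_add_sub_FT_sub hv₀, funext hfa, FT_const_mul, norm_mul, norm_mul, Complex.norm_I,
      Complex.norm_real, norm_of_nonneg hm.le, one_mul]
  · set g := fun x : EuclideanSpace ℝ (Fin 2) => 2 * α₁ * ((1 + ‖x‖) * exp (-α₂ * ‖x‖))
    have hg : MemLp g 2 volume := (memLp_two_one_add_norm_mul_exp_neg hα₂).const_mul _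
    have hfg : ∀ a, a ≠ 0 → ∀ x, ‖f a x‖ ≤ ‖g x‖ := fun a ha x =>
      calc ‖f a x‖ ≤ 2 * (1 + ‖x‖) * v₀ x := by
            rw [hf]; exact abs_neg_two_mul_inv_min_mul_sin_inner_mul_le ha x (hpos x)
        _ ≤ 2 * (1 + ‖x‖) * (α₁ * exp (-α₂ * ‖x‖)) := by gcongr; exact hdecay x
        _ = g x := by ring
        _ ≤ ‖g x‖ := le_norm_self _
    refine ⟨(eLpNorm g 2 volume).toReal, fun a ha =>
      ⟨hg.of_le (by simp only [hf]; fun_prop) (.of_forall (hfg a ha)), ?_⟩⟩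
    rw [ENNReal.ofReal_toReal hg.eLpNorm_ne_top]
    exact eLpNorm_mono (hfg a ha)

/-- For a nonnegative Borel `v₀` with exponential decay, and
`f_a(x) = -2 min(1,|a|)⁻¹ sin(a·x) v₀(x)`, one has
`|v̂₀(p+a) − v̂₀(p−a)| ≤ min(1,|a|) |f̂_a(p)|`, and the `L²` norms of the `f_a`
are bounded uniformly in `a ≠ 0`. -/
theorem stmt4 (v₀ : EuclideanSpace ℝ (Fin 2) → ℝ) (hmeas : Measurable v₀)
    (hpos : ∀ x, 0 ≤ v₀ x) (α₁ α₂ : ℝ) (hα₁ : 0 < α₁) (hα₂ : 0 < α₂)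
    (hdecay : ∀ x, v₀ x ≤ α₁ * Real.exp (-α₂ * ‖x‖))
    (f : EuclideanSpace ℝ (Fin 2) → EuclideanSpace ℝ (Fin 2) → ℝ)
    (hf : ∀ a x, f a x = -2 * (min 1 ‖a‖)⁻¹ * Real.sin (inner ℝ a x : ℝ) * v₀ x) :
    (∀ a : EuclideanSpace ℝ (Fin 2), a ≠ 0 → ∀ p : EuclideanSpace ℝ (Fin 2),
      ‖FT (fun x => (v₀ x : ℂ)) (p + a) - FT (fun x => (v₀ x : ℂ)) (p - a)‖ ≤
        min 1 ‖a‖ * ‖FT (fun x => (f a x : ℂ)) p‖) ∧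
    (∃ C : ℝ, ∀ a : EuclideanSpace ℝ (Fin 2), a ≠ 0 →
      MemLp (fun x => f a x) 2 volume ∧
      eLpNorm (fun x => f a x) 2 volume ≤ ENNReal.ofReal C) :=
  stmt4_general v₀ hmeas hpos α₁ α₂ hα₂ hdecay f hf
end

section
/- Let ψ : ℝ² → ℂ be defined by ψ(x) = |v(|x|)|^{1/2} η(x) where |v(x)| ≤ α₁ e^{−α₂|x|} and η ∈ L²(ℝ²) with ‖η‖ = 1. Then the Fourier transform ψ̂ satisfies |ψ̂(p)| ≤ α|p| for some constant α > 0 and all p ∈ ℝ², where one may take α = π^{−1} ‖ |x| |v(|x|)|^{1/2} ‖_{L²}. -/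
/-!
Since `η` is odd and the weight `√|v(|x|)|` is radial, `ψ` is odd, hence `∫ ψ = 0` and
`ψ̂(p) = (2π)⁻¹ ∫ (e^{-ip·x} - 1) ψ(x) dx`. Now `|e^{-it} - 1| ≤ |t|` and `|p·x| ≤ |p| |x|`, and
Cauchy–Schwarz against `‖η‖₂ = 1` bounds `∫ |x| |ψ(x)| dx` by `‖ |x| |v(|x|)|^{1/2} ‖₂`.
The exponential decay of `v` makes every weight integrable on `ℝ²`, via polar coordinates.
-/

open MeasureTheory Real

section RadialDecay

variable {E : Type*} [NormedAddCommGroup E] [NormedSpace ℝ E] [Nontrivial E]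
  [FiniteDimensional ℝ E] [MeasurableSpace E] [BorelSpace E]
  (μ : Measure E) [μ.IsAddHaarMeasure]

theorem integrable_norm_pow_mul_exp_neg_mul_norm (k : ℕ) {a : ℝ} (ha : 0 < a) :
    Integrable (fun x : E => ‖x‖ ^ k * exp (-a * ‖x‖)) μ := by
  rw [integrable_fun_norm_addHaar μ (f := fun r => r ^ k * exp (-a * r))]
  have hs : (-1 : ℝ) < (Module.finrank ℝ E - 1 + k : ℕ) :=
    neg_one_lt_zero.trans_le (Nat.cast_nonneg _)
  refine (integrableOn_rpow_mul_exp_neg_mul_rpow hs one_pos ha).congr_fun (fun r _ => ?_)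
    measurableSet_Ioi
  simp only [rpow_natCast, rpow_one, smul_eq_mul, pow_add]
  ring

theorem integrable_norm_pow_mul_of_abs_le_exp {g : ℝ → ℝ} (hg : Measurable g) {c a : ℝ}
    (ha : 0 < a) (hdecay : ∀ r, 0 ≤ r → |g r| ≤ c * exp (-a * r)) (k : ℕ) :
    Integrable (fun x : E => ‖x‖ ^ k * |g ‖x‖|) μ := by
  refine ((integrable_norm_pow_mul_exp_neg_mul_norm μ k ha).const_mul c).mono'
    (by fun_prop) (.of_forall fun x => ?_)
  rw [norm_mul, norm_pow, norm_norm, norm_abs_eq_norm, Real.norm_eq_abs]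
  calc ‖x‖ ^ k * |g ‖x‖| ≤ ‖x‖ ^ k * (c * exp (-a * ‖x‖)) := by
        gcongr; exact hdecay _ (norm_nonneg x)
    _ = c * (‖x‖ ^ k * exp (-a * ‖x‖)) := by ring

end RadialDecay

theorem integral_eq_zero_of_odd {G F : Type*} [AddGroup G] [MeasurableSpace G] [MeasurableNeg G]
    {μ : Measure G} [μ.IsNegInvariant] [NormedAddCommGroup F] [NormedSpace ℝ F] {f : G → F}
    (hf : f.Odd) : ∫ x, f x ∂μ = 0 := by
  have h : ∫ x, f x ∂μ = -∫ x, f x ∂μ := calc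
    ∫ x, f x ∂μ = ∫ x, f (-x) ∂μ := (integral_neg_eq_self f μ).symm
    _ = -∫ x, f x ∂μ := by simp only [hf.eq, integral_neg]
  have h2 : (2 : ℝ) • ∫ x, f x ∂μ = 0 := by
    rw [two_smul]; nth_rw 1 [h]; exact neg_add_cancel _
  exact (smul_eq_zero.mp h2).resolve_left two_ne_zero

theorem integral_norm_mul_norm_le_sqrt_mul_sqrt {α E F : Type*} [MeasurableSpace α]
    {μ : Measure α} [NormedAddCommGroup E] [NormedAddCommGroup F] {f : α → E} {g : α → F}
    (hf : MemLp f 2 μ) (hg : MemLp g 2 μ) :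
    ∫ a, ‖f a‖ * ‖g a‖ ∂μ ≤ √(∫ a, ‖f a‖ ^ 2 ∂μ) * √(∫ a, ‖g a‖ ^ 2 ∂μ) := by
  have h := integral_mul_le_Lp_mul_Lq_of_nonneg HolderConjugate.two_two
    (.of_forall fun a => norm_nonneg (f a)) (.of_forall fun a => norm_nonneg (g a))
    (by simpa using hf.norm) (by simpa using hg.norm)
  simpa only [rpow_two, sqrt_eq_rpow] using h

section Fourier

variable {V : Type*} [NormedAddCommGroup V] [InnerProductSpace ℝ V] [MeasurableSpace V]
  [BorelSpace V] {μ : Measure V}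

open Complex in
theorem norm_integral_exp_inner_mul_le {ψ : V → ℂ} (hψ : Integrable ψ μ)
    (hψ₀ : ∫ x, ψ x ∂μ = 0) (hxψ : Integrable (fun x => ‖x‖ * ‖ψ x‖) μ) (p : V) :
    ‖∫ x, exp (-I * (inner ℝ p x : ℂ)) * ψ x ∂μ‖ ≤ ‖p‖ * ∫ x, ‖x‖ * ‖ψ x‖ ∂μ := by
  have hphase : Continuous fun x => exp (-I * (inner ℝ p x : ℂ)) := by fun_prop
  have hbound (x : V) :
      ‖(exp (-I * (inner ℝ p x : ℂ)) - 1) * ψ x‖ ≤ ‖p‖ * (‖x‖ * ‖ψ x‖) := by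
    rw [norm_mul, ← mul_assoc]
    gcongr
    calc ‖exp (-I * (inner ℝ p x : ℂ)) - 1‖ = ‖exp (I * ((-inner ℝ p x : ℝ) : ℂ)) - 1‖ := by
          push_cast; ring_nf
      _ ≤ ‖-inner ℝ p x‖ := norm_exp_I_mul_ofReal_sub_one_le
      _ ≤ ‖p‖ * ‖x‖ := by rw [norm_neg]; exact norm_inner_le_norm p x
  have hphaseψ : Integrable (fun x => exp (-I * (inner ℝ p x : ℂ)) * ψ x) μ :=
    hψ.bdd_mul hphase.aestronglyMeasurable (c := 1) (.of_forall fun x => by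
      rw [norm_exp]; simp)
  calc ‖∫ x, exp (-I * (inner ℝ p x : ℂ)) * ψ x ∂μ‖
      = ‖∫ x, (exp (-I * (inner ℝ p x : ℂ)) - 1) * ψ x ∂μ‖ := by
        simp only [sub_mul, one_mul]; rw [integral_sub hphaseψ hψ, hψ₀, sub_zero]
    _ ≤ ∫ x, ‖p‖ * (‖x‖ * ‖ψ x‖) ∂μ :=
        norm_integral_le_of_norm_le (hxψ.const_mul _) (.of_forall hbound)
    _ = ‖p‖ * ∫ x, ‖x‖ * ‖ψ x‖ ∂μ := integral_const_mul _ _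

end Fourier

theorem norm_FT_smul_le {m : EuclideanSpace ℝ (Fin 2) → ℝ} {η : EuclideanSpace ℝ (Fin 2) → ℂ}
    (hm_even : m.Even) (hη_odd : η.Odd) (hm : MemLp m 2 volume)
    (hxm : MemLp (fun x => ‖x‖ * m x) 2 volume) (hη : MemLp η 2 volume)
    (p : EuclideanSpace ℝ (Fin 2)) :
    ‖FT (m • η) p‖ ≤ (2 * π)⁻¹ * ‖p‖ *
      (√(∫ x, (‖x‖ * m x) ^ 2) * √(∫ x, ‖η x‖ ^ 2)) := by
  have hodd : (m • η).Odd := fun x => by simp [hm_even.eq, hη_odd.eq]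
  have hxψ : (fun x => ‖x‖ * ‖(m • η) x‖) = fun x => ‖‖x‖ * m x‖ * ‖η x‖ := by
    ext x; simp only [Pi.smul_apply', norm_smul, norm_mul, norm_norm]; ring
  have hxψ_int : Integrable (fun x => ‖x‖ * ‖(m • η) x‖) volume := by
    rw [hxψ]
    simpa only [Pi.smul_apply', norm_smul] using (memLp_one_iff_integrable.1 (hη.smul hxm)).norm
  rw [FT, norm_mul, mul_assoc]
  gcongr
  · simp [abs_of_pos pi_pos]
  refine (norm_integral_exp_inner_mul_le (memLp_one_iff_integrable.1 (hη.smul hm))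
    (integral_eq_zero_of_odd hodd) hxψ_int p).trans ?_
  gcongr
  calc ∫ x, ‖x‖ * ‖(m • η) x‖ = ∫ x, ‖‖x‖ * m x‖ * ‖η x‖ := by rw [hxψ]
    _ ≤ √(∫ x, ‖‖x‖ * m x‖ ^ 2) * √(∫ x, ‖η x‖ ^ 2) :=
        integral_norm_mul_norm_le_sqrt_mul_sqrt hxm hη
    _ = √(∫ x, (‖x‖ * m x) ^ 2) * √(∫ x, ‖η x‖ ^ 2) := by simp only [Real.norm_eq_abs, sq_abs]

theorem stmt5_general (v : ℝ → ℝ) (hv : Measurable v) (α₁ α₂ : ℝ)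
    (hα₂ : 0 < α₂) (hdecay : ∀ x : ℝ, 0 ≤ x → |v x| ≤ α₁ * Real.exp (-α₂ * x))
    (η : EuclideanSpace ℝ (Fin 2) → ℂ) (hη : MemLp η 2 volume)
    (hnorm : ∫ x : EuclideanSpace ℝ (Fin 2), ‖η x‖ ^ 2 = 1)
    (hodd : ∀ x, η (-x) = -η x)
    (ψ : EuclideanSpace ℝ (Fin 2) → ℂ)
    (hψ : ∀ x, ψ x = (Real.sqrt |v ‖x‖| : ℂ) * η x)
    (α : ℝ)
    (hα : α = π⁻¹ * Real.sqrt (∫ x : EuclideanSpace ℝ (Fin 2), ‖x‖ ^ 2 * |v ‖x‖|)) :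
    ∀ p : EuclideanSpace ℝ (Fin 2), ‖FT ψ p‖ ≤ α * ‖p‖ := by
  intro p
  set m : EuclideanSpace ℝ (Fin 2) → ℝ := fun x => √|v ‖x‖|
  have hm_meas : Measurable m := by fun_prop
  have hm_sq (x : EuclideanSpace ℝ (Fin 2)) : m x ^ 2 = |v ‖x‖| := sq_sqrt (abs_nonneg _)
  have hm : MemLp m 2 volume := by
    rw [memLp_two_iff_integrable_sq hm_meas.aestronglyMeasurable]
    simpa [hm_sq] using integrable_norm_pow_mul_of_abs_le_exp volume hv hα₂ hdecay 0
  have hxm : MemLp (fun x => ‖x‖ * m x) 2 volume := by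
    rw [memLp_two_iff_integrable_sq (by fun_prop)]
    simpa [mul_pow, hm_sq] using integrable_norm_pow_mul_of_abs_le_exp volume hv hα₂ hdecay 2
  have hψm : ψ = m • η := funext fun x => by rw [hψ x, Pi.smul_apply', Complex.real_smul]
  have hm_even : m.Even := fun x => by simp only [m, norm_neg]
  calc ‖FT ψ p‖ ≤ (2 * π)⁻¹ * ‖p‖ * (√(∫ x, (‖x‖ * m x) ^ 2) * √(∫ x, ‖η x‖ ^ 2)) :=
        hψm ▸ norm_FT_smul_le hm_even hodd hm hxm hη p
    _ = (2 * π)⁻¹ * √(∫ x, ‖x‖ ^ 2 * |v ‖x‖|) * ‖p‖ := by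
        simp only [mul_pow, hm_sq, hnorm, sqrt_one, mul_one]; ring
    _ ≤ α * ‖p‖ := by
        rw [hα]; gcongr; linarith [pi_pos]

/-- For `ψ(x) = |v(|x|)|^{1/2} η(x)` with `v` exponentially bounded and `η` an odd
unit vector of `L²(ℝ²)`, one has `|ψ̂(p)| ≤ α |p|` with
`α = π⁻¹ ‖ |x| |v(|x|)|^{1/2} ‖_{L²}`. -/
theorem stmt5 (v : ℝ → ℝ) (hv : Measurable v) (α₁ α₂ : ℝ) (hα₁ : 0 < α₁)
    (hα₂ : 0 < α₂) (hdecay : ∀ x : ℝ, 0 ≤ x → |v x| ≤ α₁ * Real.exp (-α₂ * x))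
    (η : EuclideanSpace ℝ (Fin 2) → ℂ) (hη : MemLp η 2 volume)
    (hnorm : ∫ x : EuclideanSpace ℝ (Fin 2), ‖η x‖ ^ 2 = 1)
    (hodd : ∀ x, η (-x) = -η x)
    (ψ : EuclideanSpace ℝ (Fin 2) → ℂ)
    (hψ : ∀ x, ψ x = (Real.sqrt |v ‖x‖| : ℂ) * η x)
    (α : ℝ)
    (hα : α = π⁻¹ * Real.sqrt (∫ x : EuclideanSpace ℝ (Fin 2), ‖x‖ ^ 2 * |v ‖x‖|)) :
    ∀ p : EuclideanSpace ℝ (Fin 2), ‖FT ψ p‖ ≤ α * ‖p‖ :=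
  stmt5_general v hv α₁ α₂ hα₂ hdecay η hη hnorm hodd ψ hψ α hα
end

section
/- Fix X > 0 and consider the system of integral equations on C¹([0, X]): λ f₁(x) = ∫_x^X f₂(x') dx' and λ f₂(x) = ∫₀^x f₁(x') dx' with λ ≠ 0. The nonzero eigenvalues of this system are exactly λ_k = ± X / (π/2 + π(k−1)) for k = 1, 2, 3, …, with eigenfunctions f₁(x) = cos(λ^{−1}x + φ), f₂(x) = sin(λ^{−1}x + φ) for suitable phase φ. -/
open MeasureTheory Set Real intervalIntegral

/-- The system `λ f₁(x) = ∫ₓ^X f₂`, `λ f₂(x) = ∫₀ˣ f₁` on `C¹([0,X])` has a nonzero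
solution iff `|λ| = X/(π/2 + πk)` for some `k = 0, 1, 2, …` (i.e. the nonzero
eigenvalues are exactly `± X/(π/2 + π(k−1))`, `k = 1, 2, …`). -/
theorem stmt10 (X : ℝ) (hX : 0 < X) (lam : ℝ) (hlam : lam ≠ 0) :
    (∃ f₁ f₂ : ℝ → ℝ,
      ContDiffOn ℝ 1 f₁ (Icc 0 X) ∧ ContDiffOn ℝ 1 f₂ (Icc 0 X) ∧
      (∀ x ∈ Icc 0 X, lam * f₁ x = ∫ t in x..X, f₂ t) ∧
      (∀ x ∈ Icc 0 X, lam * f₂ x = ∫ t in (0:ℝ)..x, f₁ t) ∧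
      (∃ x ∈ Icc 0 X, f₁ x ≠ 0 ∨ f₂ x ≠ 0)) ↔
    ∃ k : ℕ, |lam| = X / (π / 2 + π * k) := by
  constructor
  · rintro ⟨f₁, f₂, h₁, h₂, he₁, he₂, hnz⟩
    have h0X : (0:ℝ) ∈ Icc (0:ℝ) X := ⟨le_refl 0, hX.le⟩
    have hXX : X ∈ Icc (0:ℝ) X := ⟨hX.le, le_refl X⟩
    have cont₁ := h₁.continuousOn
    have cont₂ := h₂.continuousOn
    -- integrability on subintervals
    have hsub : ∀ x ∈ Icc (0:ℝ) X, Icc (0:ℝ) x ⊆ Icc 0 X := fun x hx => Icc_subset_Icc le_rfl hx.2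
    have hint₁ : ∀ x ∈ Icc (0:ℝ) X, IntervalIntegrable f₁ volume 0 x := fun x hx =>
      (cont₁.mono (by rw [uIcc_of_le hx.1]; exact hsub x hx)).intervalIntegrable
    have hint₂ : ∀ x ∈ Icc (0:ℝ) X, IntervalIntegrable f₂ volume 0 x := fun x hx =>
      (cont₂.mono (by rw [uIcc_of_le hx.1]; exact hsub x hx)).intervalIntegrable
    -- boundary values
    have hf₂0 : f₂ 0 = 0 := by
      have h := he₂ 0 h0X
      simp only [intervalIntegral.integral_same] at h
      exact (mul_eq_zero.1 h).resolve_left hlam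
    have hf₁X : f₁ X = 0 := by
      have h := he₁ X hXX
      simp only [intervalIntegral.integral_same] at h
      exact (mul_eq_zero.1 h).resolve_left hlam
    set c : ℝ := lam⁻¹ with hc
    set F₁ : ℝ → ℝ := fun x => c * ((∫ t in (0:ℝ)..X, f₂ t) - ∫ t in (0:ℝ)..x, f₂ t) with hF₁def
    set F₂ : ℝ → ℝ := fun x => c * ∫ t in (0:ℝ)..x, f₁ t with hF₂def
    have hF₁ : ∀ x ∈ Icc (0:ℝ) X, F₁ x = f₁ x := by
      intro x hx
      have hsplit : (∫ t in (0:ℝ)..X, f₂ t) - ∫ t in (0:ℝ)..x, f₂ t = ∫ t in x..X, f₂ t :=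
        intervalIntegral.integral_interval_sub_left (hint₂ X hXX) (hint₂ x hx)
      rw [hF₁def]
      simp only
      rw [hsplit, ← he₁ x hx, hc]
      field_simp
    have hF₂ : ∀ x ∈ Icc (0:ℝ) X, F₂ x = f₂ x := by
      intro x hx
      rw [hF₂def]; simp only
      rw [← he₂ x hx, hc]; field_simp
    -- the auxiliary constant functions
    set u : ℝ → ℝ := fun x => F₁ x * Real.cos (c * x) + F₂ x * Real.sin (c * x) with hudef
    set v : ℝ → ℝ := fun x => F₂ x * Real.cos (c * x) - F₁ x * Real.sin (c * x) with hvdef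
    -- continuity of F₁, F₂ on Icc
    have contF₁ : ContinuousOn F₁ (Icc 0 X) := cont₁.congr hF₁
    have contF₂ : ContinuousOn F₂ (Icc 0 X) := cont₂.congr hF₂
    have contu : ContinuousOn u (Icc 0 X) := by
      apply ContinuousOn.add
      · exact contF₁.mul ((Real.continuous_cos.comp (continuous_const.mul continuous_id)).continuousOn)
      · exact contF₂.mul ((Real.continuous_sin.comp (continuous_const.mul continuous_id)).continuousOn)
    have contv : ContinuousOn v (Icc 0 X) := by
      apply ContinuousOn.sub
      · exact contF₂.mul ((Real.continuous_cos.comp (continuous_const.mul continuous_id)).continuousOn)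
      · exact contF₁.mul ((Real.continuous_sin.comp (continuous_const.mul continuous_id)).continuousOn)
    -- derivatives
    have hderiv : ∀ x ∈ Ico (0:ℝ) X,
        HasDerivWithinAt F₁ (-(c * f₂ x)) (Ici x) x ∧ HasDerivWithinAt F₂ (c * f₁ x) (Ici x) x := by
      intro x hx
      have hxI : x ∈ Icc (0:ℝ) X := ⟨hx.1, hx.2.le⟩
      have hmem : Icc (0:ℝ) X ∈ nhdsWithin x (Ici x) := Icc_mem_nhdsGE_of_mem ⟨hx.1, hx.2⟩
      have hmemIoi : Icc (0:ℝ) X ∈ nhdsWithin x (Ioi x) :=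
        nhdsWithin_mono x Ioi_subset_Ici_self hmem
      have hcw₁ : ContinuousWithinAt f₁ (Ioi x) x := (cont₁ x hxI).mono_of_mem_nhdsWithin hmemIoi
      have hcw₂ : ContinuousWithinAt f₂ (Ioi x) x := (cont₂ x hxI).mono_of_mem_nhdsWithin hmemIoi
      have hm₁ : StronglyMeasurableAtFilter f₁ (nhdsWithin x (Ioi x)) volume :=
        ⟨Icc 0 X, hmemIoi, (cont₁.aestronglyMeasurable measurableSet_Icc)⟩
      have hm₂ : StronglyMeasurableAtFilter f₂ (nhdsWithin x (Ioi x)) volume :=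
        ⟨Icc 0 X, hmemIoi, (cont₂.aestronglyMeasurable measurableSet_Icc)⟩
      have I₁ : HasDerivWithinAt (fun y => ∫ t in (0:ℝ)..y, f₁ t) (f₁ x) (Ici x) x :=
        intervalIntegral.integral_hasDerivWithinAt_right (s := Ici x) (t := Ioi x)
          (hint₁ x hxI) hm₁ hcw₁
      have I₂ : HasDerivWithinAt (fun y => ∫ t in (0:ℝ)..y, f₂ t) (f₂ x) (Ici x) x :=
        intervalIntegral.integral_hasDerivWithinAt_right (s := Ici x) (t := Ioi x)
          (hint₂ x hxI) hm₂ hcw₂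
      constructor
      · have := ((hasDerivWithinAt_const x (Ici x) (∫ t in (0:ℝ)..X, f₂ t)).sub I₂).const_mul c
        simpa using this
      · exact I₁.const_mul c
    have hduv : ∀ x ∈ Ico (0:ℝ) X,
        HasDerivWithinAt u 0 (Ici x) x ∧ HasDerivWithinAt v 0 (Ici x) x := by
      intro x hx
      have hxI : x ∈ Icc (0:ℝ) X := ⟨hx.1, hx.2.le⟩
      obtain ⟨d₁, d₂⟩ := hderiv x hx
      have hcos : HasDerivWithinAt (fun y => Real.cos (c * y)) (-Real.sin (c * x) * c) (Ici x) x := by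
        have h' : HasDerivAt (fun y => Real.cos (c * y)) (-Real.sin (c * x) * (c * 1)) x :=
          (Real.hasDerivAt_cos (c * x)).comp x ((hasDerivAt_id x).const_mul c)
        simpa using h'.hasDerivWithinAt
      have hsin : HasDerivWithinAt (fun y => Real.sin (c * y)) (Real.cos (c * x) * c) (Ici x) x := by
        have h' : HasDerivAt (fun y => Real.sin (c * y)) (Real.cos (c * x) * (c * 1)) x :=
          (Real.hasDerivAt_sin (c * x)).comp x ((hasDerivAt_id x).const_mul c)
        simpa using h'.hasDerivWithinAt
      constructor
      · have := (d₁.mul hcos).add (d₂.mul hsin)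
        have he : -(c * f₂ x) * Real.cos (c * x) + F₁ x * (-Real.sin (c * x) * c) +
            (c * f₁ x * Real.sin (c * x) + F₂ x * (Real.cos (c * x) * c)) = 0 := by
          rw [hF₁ x hxI, hF₂ x hxI]; ring
        rw [he] at this
        exact this
      · have := (d₂.mul hcos).sub (d₁.mul hsin)
        have he : c * f₁ x * Real.cos (c * x) + F₂ x * (-Real.sin (c * x) * c) -
            (-(c * f₂ x) * Real.sin (c * x) + F₁ x * (Real.cos (c * x) * c)) = 0 := by
          rw [hF₁ x hxI, hF₂ x hxI]; ring
        rw [he] at this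
        exact this
    have hu : ∀ x ∈ Icc (0:ℝ) X, u x = u 0 :=
      constant_of_has_deriv_right_zero contu (fun x hx => (hduv x hx).1)
    have hv : ∀ x ∈ Icc (0:ℝ) X, v x = v 0 :=
      constant_of_has_deriv_right_zero contv (fun x hx => (hduv x hx).2)
    have hu0 : u 0 = f₁ 0 := by
      rw [hudef]; simp [hF₁ 0 h0X, hF₂ 0 h0X, hf₂0]
    have hv0 : v 0 = 0 := by
      rw [hvdef]; simp [hF₁ 0 h0X, hF₂ 0 h0X, hf₂0]
    -- explicit form of f₁, f₂
    have hform : ∀ x ∈ Icc (0:ℝ) X, f₁ x = f₁ 0 * Real.cos (c * x) ∧ f₂ x = f₁ 0 * Real.sin (c * x) := by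
      intro x hx
      have Hu : f₁ x * Real.cos (c * x) + f₂ x * Real.sin (c * x) = f₁ 0 := by
        have := hu x hx; rw [hu0] at this
        rw [hudef] at this; simp only at this
        rwa [hF₁ x hx, hF₂ x hx] at this
      have Hv : f₂ x * Real.cos (c * x) - f₁ x * Real.sin (c * x) = 0 := by
        have := hv x hx; rw [hv0] at this
        rw [hvdef] at this; simp only at this
        rwa [hF₁ x hx, hF₂ x hx] at this
      have hpyth := Real.sin_sq_add_cos_sq (c * x)
      constructor
      · linear_combination Real.cos (c * x) * Hu - Real.sin (c * x) * Hv - f₁ x * hpyth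
      · linear_combination Real.sin (c * x) * Hu + Real.cos (c * x) * Hv - f₂ x * hpyth
    -- f₁ 0 ≠ 0
    obtain ⟨x₀, hx₀, hne⟩ := hnz
    have hK : f₁ 0 ≠ 0 := by
      intro h
      obtain ⟨e1, e2⟩ := hform x₀ hx₀
      rcases hne with h' | h'
      · exact h' (by rw [e1, h, zero_mul])
      · exact h' (by rw [e2, h, zero_mul])
    -- cos (c X) = 0
    have hcosX : Real.cos (c * X) = 0 := by
      have := (hform X hXX).1
      rw [hf₁X] at this
      rcases mul_eq_zero.1 this.symm with h | h
      · exact absurd h hK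
      · exact h
    -- extract k
    obtain ⟨n, hn⟩ := Real.cos_eq_zero_iff.1 hcosX
    have hπ : (0:ℝ) < π := Real.pi_pos
    have habs : X / |lam| = |(2 * (n:ℝ) + 1)| * (π / 2) := by
      have : |c * X| = |(2 * (n:ℝ) + 1) * π / 2| := by rw [hn]
      rw [abs_mul, abs_of_pos hX] at this
      rw [div_eq_mul_inv, mul_comm X, ← abs_inv, ← hc]
      rw [this, abs_div, abs_mul]
      simp [abs_of_pos hπ, abs_of_pos (by norm_num : (0:ℝ) < 2), mul_div_assoc]
    obtain ⟨m, hm'⟩ : ∃ m : ℕ, (2 * n + 1).natAbs = 2 * m + 1 := by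
      rcases le_or_gt 0 n with h | h
      · exact ⟨n.toNat, by omega⟩
      · exact ⟨(-n - 1).toNat, by omega⟩
    have hm : |(2 * (n:ℝ) + 1)| = 2 * (m:ℝ) + 1 := by
      have hcast : ((2 * n + 1 : ℤ) : ℝ) = 2 * (n:ℝ) + 1 := by push_cast; ring
      rw [← hcast, ← Int.cast_abs, Int.abs_eq_natAbs, hm']
      push_cast; ring
    refine ⟨m, ?_⟩
    have hd : X / |lam| = π / 2 + π * (m:ℝ) := by rw [habs, hm]; ring
    have hD : (0:ℝ) < π / 2 + π * (m:ℝ) := by positivity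
    have hl : (0:ℝ) < |lam| := abs_pos.2 hlam
    field_simp at hd ⊢
    linarith
  · rintro ⟨k, hk⟩
    have hd : (0:ℝ) < π / 2 + π * k := by positivity
    have hcosX : Real.cos (X / lam) = 0 := by
      have habs : |X / lam| = π / 2 + π * k := by
        rw [abs_div, abs_of_pos hX, hk]
        field_simp
      have : Real.cos |X / lam| = 0 := by
        rw [habs, Real.cos_eq_zero_iff]
        exact ⟨(k : ℤ), by push_cast; ring⟩
      rcases abs_choice (X / lam) with h | h
      · rwa [h] at this
      · rw [h, Real.cos_neg] at this; exact this
    refine ⟨fun x => Real.cos (x / lam), fun x => Real.sin (x / lam), ?_, ?_, ?_, ?_, ?_⟩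
    · exact (Real.contDiff_cos.comp (contDiff_id.div_const lam)).contDiffOn
    · exact (Real.contDiff_sin.comp (contDiff_id.div_const lam)).contDiffOn
    · intro x hx
      show lam * Real.cos (x / lam) = ∫ t in x..X, Real.sin (t / lam)
      rw [intervalIntegral.integral_comp_div (f := Real.sin) hlam, integral_sin,
        hcosX]
      simp [smul_eq_mul]
    · intro x hx
      show lam * Real.sin (x / lam) = ∫ t in (0:ℝ)..x, Real.cos (t / lam)
      rw [intervalIntegral.integral_comp_div (f := Real.cos) hlam, integral_cos]
      simp [smul_eq_mul, mul_comm]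
    · exact ⟨0, ⟨le_refl 0, hX.le⟩, by simp⟩
end

section
/- Let T be the compact self-adjoint operator on L²(0,X) ⊕ L²(0,X) (X > 0) given in block form by T = [[0, V], [V*, 0]], where V is the Volterra-type operator (Vg)(x) = ∫_x^X g(x') dx'. Then for every a > 0, the number of eigenvalues of T greater than a equals ⌊X/(πa) + 1/2⌋, i.e. the number of positive integers k with X/(π/2 + π(k−1)) > a. In particular n(T, a)/X → 1/(πa) as X → ∞. -/
/-!
The positive eigenvalues `X / (π/2 + πk)` are simple and strictly decreasing in `k`, and
eigenspaces of distinct eigenvalues are independent, so `n(T, a)` is the number of `k` with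
`X / (π/2 + πk) > a`, that is `⌈X/(πa) - 1/2⌉`. When `a` is not an eigenvalue, `X/(πa) - 1/2` is
not a natural number and this ceiling is `⌊X/(πa) + 1/2⌋`; since it differs from `X/(πa)` by at
most `1`, dividing by `X` gives the asymptotics.
-/

open TopologicalSpace Real Filter

/-- Number of eigenvalues of `A` greater than `a`, counted with multiplicity. -/
noncomputable def nEig {H : Type*} [NormedAddCommGroup H] [InnerProductSpace ℂ H]
    (A : H →L[ℂ] H) (a : ℝ) : ℕ :=
  Module.finrank ℂ
    ↥(⨆ μ : {μ : ℝ // a < μ}, Module.End.eigenspace (A : H →ₗ[ℂ] H) ((μ : ℝ) : ℂ))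

theorem iSupIndep.finrank_finset_sup {K V ι : Type*} [DivisionRing K] [AddCommGroup V]
    [Module K V] [DecidableEq ι] {p : ι → Submodule K V} (hp : iSupIndep p)
    [∀ i, FiniteDimensional K (p i)] (s : Finset ι) :
    Module.finrank K ↥(s.sup p) = ∑ i ∈ s, Module.finrank K (p i) := by
  induction s using Finset.induction_on with
  | empty => simp
  | insert i s hi ih =>
    have hdisj : Disjoint (p i) (s.sup p) := by
      rw [Finset.sup_eq_iSup]
      simpa only [Finset.mem_coe] using hp.disjoint_biSup (y := ↑s) hi
    rw [Finset.sup_insert, Finset.sum_insert hi, ← ih, ← Submodule.finrank_sup_add_finrank_inf_eq,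
      hdisj.eq_bot, finrank_bot, add_zero]

theorem Nat.ceil_eq_floor_add_one {R : Type*} [Ring R] [LinearOrder R] [IsStrictOrderedRing R]
    [FloorSemiring R] {s : R} (hs : ∀ k : ℕ, (k : R) ≠ s) : ⌈s⌉₊ = ⌊s + 1⌋₊ := by
  rcases lt_or_ge s 0 with hneg | hnonneg
  · rw [Nat.ceil_eq_zero.mpr hneg.le, Nat.floor_eq_zero.mpr (by simpa using hneg)]
  · rw [Nat.floor_add_one hnonneg]
    exact le_antisymm (Nat.ceil_le_floor_add_one s)
      (Nat.lt_ceil.mpr ((Nat.floor_le hnonneg).lt_of_ne (hs _)))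

theorem tendsto_div_atTop_of_abs_sub_mul_le {f : ℝ → ℝ} {c C : ℝ}
    (h : ∀ᶠ x in atTop, |f x - c * x| ≤ C) : Tendsto (fun x => f x / x) atTop (nhds c) := by
  have hrem : Tendsto (fun x => (f x - c * x) / x) atTop (nhds 0) := by
    refine squeeze_zero_norm' ?_ (tendsto_const_nhds (x := C) |>.div_atTop tendsto_id)
    filter_upwards [h, eventually_gt_atTop 0] with x hx hx0
    rw [Real.norm_eq_abs, abs_div, abs_of_pos hx0]
    exact div_le_div_of_nonneg_right hx hx0.le
  rw [← add_zero c]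
  refine (hrem.const_add c).congr' ?_
  filter_upwards [eventually_ne_atTop 0] with x hx
  field_simp
  ring

theorem nEig_eq_card {H ι : Type*} [NormedAddCommGroup H] [InnerProductSpace ℂ H]
    [DecidableEq ι] {A : H →L[ℂ] H} {a : ℝ} {ev : ι → ℝ}
    (hev_inj : Function.Injective ev)
    (hev : ∀ μ : ℝ, a < μ → Module.End.eigenspace (A : H →ₗ[ℂ] H) (μ : ℂ) ≠ ⊥ →
      μ ∈ Set.range ev)
    (hsimple : ∀ i, Module.finrank ℂ (Module.End.eigenspace (A : H →ₗ[ℂ] H) (ev i : ℂ)) = 1)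
    (s : Finset ι) (hs : ∀ i, i ∈ s ↔ a < ev i) :
    nEig A a = s.card := by
  set E : ℝ → Submodule ℂ H := fun μ => Module.End.eigenspace (A : H →ₗ[ℂ] H) (μ : ℂ)
  have : ∀ i, FiniteDimensional ℂ (E (ev i)) :=
    fun i => Module.finite_of_finrank_eq_succ (hsimple i)
  have hsup : (⨆ μ : {μ : ℝ // a < μ}, E μ) = s.sup (fun i => E (ev i)) := by
    refine le_antisymm (iSup_le fun ⟨μ, hμ⟩ => ?_) (Finset.sup_le fun i hi => ?_)
    · by_cases hbot : E μ = ⊥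
      · exact hbot ▸ bot_le
      · obtain ⟨i, rfl⟩ := hev μ hμ hbot
        exact Finset.le_sup (f := fun i => E (ev i)) ((hs i).2 hμ)
    · exact le_iSup_of_le ⟨ev i, (hs i).1 hi⟩ le_rfl
  have hind : iSupIndep fun i => E (ev i) :=
    ((Module.End.eigenspaces_iSupIndep (A : H →ₗ[ℂ] H)).comp Complex.ofReal_injective).comp
      hev_inj
  rw [nEig, hsup, hind.finrank_finset_sup, Finset.card_eq_sum_ones]
  exact Finset.sum_congr rfl fun i _ => hsimple i

theorem pi_half_add_mul_pos (k : ℕ) : 0 < π / 2 + π * k := by positivity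

theorem lt_div_pi_half_add_mul_iff {a : ℝ} (X : ℝ) (ha : 0 < a) (k : ℕ) :
    a < X / (π / 2 + π * k) ↔ (k : ℝ) < X / (π * a) - 1 / 2 := by
  rw [lt_div_iff₀ (pi_half_add_mul_pos k), lt_sub_iff_add_lt, lt_div_iff₀ (by positivity)]
  constructor <;> intro h <;> linarith

theorem div_pi_half_add_mul_eq_iff {a : ℝ} (X : ℝ) (ha : 0 < a) (k : ℕ) :
    X / (π / 2 + π * k) = a ↔ (k : ℝ) = X / (π * a) - 1 / 2 := by
  rw [div_eq_iff (pi_half_add_mul_pos k).ne', eq_sub_iff_add_eq, eq_div_iff (by positivity)]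
  constructor <;> intro h <;> linarith

theorem strictAnti_div_pi_half_add_mul {X : ℝ} (hX : 0 < X) :
    StrictAnti fun k : ℕ => X / (π / 2 + π * k) := fun k j hkj =>
  div_lt_div_of_pos_left hX (pi_half_add_mul_pos k) (by gcongr)

theorem nEig_eq_natCeil {H : Type*} [NormedAddCommGroup H] [InnerProductSpace ℂ H]
    {A : H →L[ℂ] H} {a X : ℝ} (ha : 0 < a) (hX : 0 < X)
    (heig : ∀ μ : ℝ, μ ≠ 0 →
      (Module.End.eigenspace (A : H →ₗ[ℂ] H) (μ : ℂ) ≠ ⊥ ↔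
        ∃ k : ℕ, μ = X / (π / 2 + π * k) ∨ μ = -(X / (π / 2 + π * k))))
    (hsimple : ∀ k : ℕ, Module.finrank ℂ
      (Module.End.eigenspace (A : H →ₗ[ℂ] H) ((X / (π / 2 + π * k) : ℝ) : ℂ)) = 1) :
    nEig A a = ⌈X / (π * a) - 1 / 2⌉₊ := by
  refine (nEig_eq_card (strictAnti_div_pi_half_add_mul hX).injective (fun μ hμ hne => ?_)
    hsimple (Finset.range _) fun k => ?_).trans (Finset.card_range _)
  · obtain ⟨k, rfl | rfl⟩ := (heig μ (ha.trans hμ).ne').1 hne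
    · exact ⟨k, rfl⟩
    · have := div_pos hX (pi_half_add_mul_pos k)
      linarith
  · rw [Finset.mem_range, Nat.lt_ceil, lt_div_pi_half_add_mul_iff X ha]

theorem stmt11_general {H : Type*} [NormedAddCommGroup H] [InnerProductSpace ℂ H]
    (T : ℝ → (H →L[ℂ] H)) (a : ℝ) (ha : 0 < a)
    (heig : ∀ X > (0:ℝ), ∀ μ : ℝ, μ ≠ 0 →
      (Module.End.eigenspace ((T X) : H →ₗ[ℂ] H) ((μ : ℝ) : ℂ) ≠ ⊥ ↔
        ∃ k : ℕ, μ = X / (π / 2 + π * k) ∨ μ = -(X / (π / 2 + π * k))))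
    (hsimple : ∀ X > (0:ℝ), ∀ k : ℕ,
      Module.finrank ℂ
        (Module.End.eigenspace ((T X) : H →ₗ[ℂ] H) ((X / (π / 2 + π * k) : ℝ) : ℂ)) = 1) :
    (∀ X > (0:ℝ), (¬ ∃ k : ℕ, X / (π / 2 + π * k) = a) →
      nEig (T X) a = ⌊X / (π * a) + 1 / 2⌋₊) ∧
    Tendsto (fun X : ℝ => (nEig (T X) a : ℝ) / X) atTop (nhds (1 / (π * a))) := by
  have hcount : ∀ X > 0, nEig (T X) a = ⌈X / (π * a) - 1 / 2⌉₊ :=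
    fun X hX => nEig_eq_natCeil ha hX (heig X hX) (hsimple X hX)
  refine ⟨fun X hX hnd => ?_, tendsto_div_atTop_of_abs_sub_mul_le (C := 1) ?_⟩
  · rw [hcount X hX, show X / (π * a) + 1 / 2 = X / (π * a) - 1 / 2 + 1 by ring]
    exact Nat.ceil_eq_floor_add_one fun k hk => hnd ⟨k, (div_pi_half_add_mul_eq_iff X ha k).2 hk⟩
  · filter_upwards [eventually_ge_atTop (π * a)] with X hX
    have hπa : 0 < π * a := by positivity
    have hhalf : 0 ≤ X / (π * a) - 1 / 2 := by
      have := (one_le_div hπa).2 hX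
      linarith
    have hlower := Nat.le_ceil (X / (π * a) - 1 / 2)
    have hupper := Nat.ceil_lt_add_one hhalf
    rw [hcount X (hπa.trans_le hX), one_div_mul_eq_div, abs_le]
    constructor <;> linarith

/-- For the block operator `T = [[0,V],[V*,0]]` on `L²(0,X) ⊕ L²(0,X)` (encoded here,
for each `X > 0`, as a compact self-adjoint operator `T X` whose nonzero eigenvalues
are exactly `± X/(π/2 + π(k−1))`, `k ≥ 1`, each simple) the eigenvalue counting
function satisfies `n(T X, a) = ⌊X/(πa) + 1/2⌋` (away from the degenerate case where
an eigenvalue equals `a`), and `n(T X, a)/X → 1/(πa)` as `X → ∞`. -/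
theorem stmt11 {H : Type*} [NormedAddCommGroup H] [InnerProductSpace ℂ H]
    [CompleteSpace H] [SeparableSpace H]
    (T : ℝ → (H →L[ℂ] H)) (a : ℝ) (ha : 0 < a)
    (hcpt : ∀ X > (0:ℝ), IsCompactOperator (T X))
    (hsa : ∀ X > (0:ℝ), IsSelfAdjoint (T X))
    (heig : ∀ X > (0:ℝ), ∀ μ : ℝ, μ ≠ 0 →
      (Module.End.eigenspace ((T X) : H →ₗ[ℂ] H) ((μ : ℝ) : ℂ) ≠ ⊥ ↔
        ∃ k : ℕ, μ = X / (π / 2 + π * k) ∨ μ = -(X / (π / 2 + π * k))))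
    (hsimple : ∀ X > (0:ℝ), ∀ k : ℕ,
      Module.finrank ℂ
        (Module.End.eigenspace ((T X) : H →ₗ[ℂ] H) ((X / (π / 2 + π * k) : ℝ) : ℂ)) = 1) :
    (∀ X > (0:ℝ), (¬ ∃ k : ℕ, X / (π / 2 + π * k) = a) →
      nEig (T X) a = ⌊X / (π * a) + 1 / 2⌋₊) ∧
    Tendsto (fun X : ℝ => (nEig (T X) a : ℝ) / X) atTop (nhds (1 / (π * a))) :=
  stmt11_general T a ha heig hsimple
end

section
/- Let g_z²(s) = δ(s)/((s² + z²)|ln(s² + z²)|) pointwise-comparable weights: suppose there exist constants 0 < δ' ≤ δ such that δ'/((s²+z²)|ln(s²+z²)|) ≤ g_z²(s) ≤ δ/((s²+z²)|ln(s²+z²)|) for s, z ∈ (0, r] with r ∈ (0, 1/4). Define ξ_z(r) = ∫₀^r g_z²(t) t dt. Then δ'/2 ≤ liminf_{z→0} ξ_z(r)/|ln|ln z²|| and limsup_{z→0} ξ_z(r)/|ln|ln z²|| ≤ δ/2. -/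
open MeasureTheory Set Real Filter

/-!
On `(0, r]` the comparison weight `t / ((t² + z²) |log (t² + z²)|)` has the explicit primitive
`-log |log (t² + z²)| / 2`, so its integral over `(0, r)` is
`(log |log z²| - log |log (r² + z²)|) / 2`. The first term is `|log |log z²||` for small `z` and
tends to infinity, while the second stays bounded, so the ratio tends to `1/2`; the two-sided bound
on `g_z²` squeezes `ξ_z(r) / |log |log z²||` between `δ'` and `δ` times this ratio.
-/

lemma setIntegral_bounds_of_mul_le_of_le_mul {α : Type*} [MeasurableSpace α] {μ : Measure α}
    {s : Set α} (hs : MeasurableSet s) {w φ : α → ℝ} {a b : ℝ} (hw : IntegrableOn w s μ)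
    (hφ : AEStronglyMeasurable φ (μ.restrict s))
    (hlo : ∀ x ∈ s, a * w x ≤ φ x) (hhi : ∀ x ∈ s, φ x ≤ b * w x) :
    a * ∫ x in s, w x ∂μ ≤ ∫ x in s, φ x ∂μ ∧ ∫ x in s, φ x ∂μ ≤ b * ∫ x in s, w x ∂μ := by
  have hφi : IntegrableOn φ s μ :=
    integrable_of_le_of_le hφ ((ae_restrict_iff' hs).2 (ae_of_all _ hlo))
      ((ae_restrict_iff' hs).2 (ae_of_all _ hhi)) (hw.const_mul a) (hw.const_mul b)
  rw [← integral_const_mul, ← integral_const_mul]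
  exact ⟨setIntegral_mono_on (hw.const_mul a) hφi hs hlo,
    setIntegral_mono_on hφi (hw.const_mul b) hs hhi⟩

lemma Filter.Tendsto.sub_div_abs_of_tendsto_atTop {α : Type*} {l : Filter α} {A c : α → ℝ}
    {b : ℝ} (hA : Tendsto A l atTop) (hc : Tendsto c l (nhds b)) :
    Tendsto (fun x => (A x - c x) / |A x|) l (nhds 1) := by
  have h : Tendsto (fun x => 1 - c x / A x) l (nhds 1) := by
    simpa using tendsto_const_nhds.sub (hc.div_atTop hA)
  refine h.congr' ?_
  filter_upwards [hA.eventually_gt_atTop 0] with x hx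
  rw [abs_of_pos hx]
  field_simp

lemma le_liminf_and_limsup_le_of_tendsto {α : Type*} {l : Filter α} [l.NeBot]
    {f u h : α → ℝ} {x y : ℝ} (hf : Tendsto f l (nhds x)) (hh : Tendsto h l (nhds y))
    (hfu : f ≤ᶠ[l] u) (huh : u ≤ᶠ[l] h) :
    x ≤ liminf u l ∧ limsup u l ≤ y := by
  have hu_le : IsBoundedUnder (· ≤ ·) l u := hh.isBoundedUnder_le.mono_le huh
  have hu_ge : IsBoundedUnder (· ≥ ·) l u := hf.isBoundedUnder_ge.mono_ge hfu
  constructor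
  · rw [← hf.liminf_eq]
    exact liminf_le_liminf hfu hf.isBoundedUnder_ge hu_le.isCoboundedUnder_ge
  · rw [← hh.limsup_eq]
    exact limsup_le_limsup huh hu_ge.isCoboundedUnder_le hh.isBoundedUnder_le

lemma tendsto_log_abs_log_sq_nhdsGT_zero :
    Tendsto (fun z : ℝ => log |log (z ^ 2)|) (nhdsWithin 0 (Ioi 0)) atTop := by
  have h : Tendsto (fun z : ℝ => log (z ^ 2)) (nhdsWithin 0 (Ioi 0)) atBot := by
    simp only [Real.log_pow]
    exact tendsto_log_nhdsGT_zero.const_mul_atBot (by norm_num)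
  exact tendsto_log_atTop.comp (tendsto_abs_atBot_atTop.comp h)

lemma tendsto_log_abs_log_sq_add_sq_nhdsGT_zero {r : ℝ} (hr0 : 0 < r) (hr1 : r < 1) :
    Tendsto (fun z : ℝ => log |log (r ^ 2 + z ^ 2)|) (nhdsWithin 0 (Ioi 0))
      (nhds (log |log (r ^ 2)|)) := by
  have hr2 : |log (r ^ 2 + 0 ^ 2)| ≠ 0 := by
    rw [zero_pow two_ne_zero, add_zero, abs_ne_zero]
    exact (log_neg (by positivity) (by nlinarith)).ne
  have hcont : ContinuousAt (fun z : ℝ => log |log (r ^ 2 + z ^ 2)|) 0 := by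
    fun_prop (disch := first | exact hr2 | positivity)
  simpa using hcont.tendsto.mono_left nhdsWithin_le_nhds

lemma sq_add_sq_mem_Ioo_of_mem_Icc {r z t : ℝ} (hz : 0 < z) (h1 : r ^ 2 + z ^ 2 < 1)
    (ht : t ∈ Icc 0 r) : t ^ 2 + z ^ 2 ∈ Ioo 0 1 :=
  ⟨by positivity, by nlinarith [ht.1, ht.2]⟩

lemma continuousOn_div_mul_abs_log_sq_add_sq {s : Set ℝ} {z : ℝ}
    (hs : ∀ t ∈ s, t ^ 2 + z ^ 2 ∈ Ioo 0 1) :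
    ContinuousOn (fun t => t / ((t ^ 2 + z ^ 2) * |log (t ^ 2 + z ^ 2)|)) s := by
  refine continuousOn_id.div (by fun_prop (disch := exact fun t ht => (hs t ht).1.ne')) ?_
  intro t ht
  obtain ⟨h0, h1⟩ := hs t ht
  exact (mul_pos h0 (abs_pos.2 (log_neg h0 h1).ne)).ne'

lemma hasDerivAt_log_abs_log_sq_add_sq {t z : ℝ} (h : t ^ 2 + z ^ 2 ∈ Ioo 0 1) :
    HasDerivAt (fun t => -(log |log (t ^ 2 + z ^ 2)|) / 2)
      (t / ((t ^ 2 + z ^ 2) * |log (t ^ 2 + z ^ 2)|)) t := by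
  have hlog : log (t ^ 2 + z ^ 2) < 0 := log_neg h.1 h.2
  have hderiv : HasDerivAt (fun t => log (log (t ^ 2 + z ^ 2)))
      (2 * t / (t ^ 2 + z ^ 2) / log (t ^ 2 + z ^ 2)) t := by
    simpa using (((hasDerivAt_pow 2 t).add_const (z ^ 2)).log h.1.ne').log hlog.ne
  simp only [log_abs]
  refine (hderiv.neg.div_const 2).congr_deriv ?_
  rw [abs_of_neg hlog]
  field_simp

lemma integral_div_mul_abs_log_sq_add_sq {r z : ℝ} (hr : 0 ≤ r) (hz : 0 < z)
    (h1 : r ^ 2 + z ^ 2 < 1) :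
    ∫ t in Ioo 0 r, t / ((t ^ 2 + z ^ 2) * |log (t ^ 2 + z ^ 2)|)
      = (log |log (z ^ 2)| - log |log (r ^ 2 + z ^ 2)|) / 2 := by
  have hmem : ∀ t ∈ uIcc 0 r, t ^ 2 + z ^ 2 ∈ Ioo 0 1 := fun t ht =>
    sq_add_sq_mem_Ioo_of_mem_Icc hz h1 (by rwa [uIcc_of_le hr] at ht)
  rw [← integral_Ioc_eq_integral_Ioo, ← intervalIntegral.integral_of_le hr,
    intervalIntegral.integral_eq_sub_of_hasDerivAt
      (fun t ht => hasDerivAt_log_abs_log_sq_add_sq (hmem t ht))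
      (continuousOn_div_mul_abs_log_sq_add_sq hmem).intervalIntegrable]
  ring_nf

lemma integral_sq_mul_bounds_of_sq_bounds {r z δ δ' : ℝ} {f : ℝ → ℝ} (hr : 0 ≤ r) (hz : 0 < z)
    (h1 : r ^ 2 + z ^ 2 < 1) (hf : Measurable f)
    (hbound : ∀ s ∈ Ioc (0:ℝ) r,
      δ' / ((s ^ 2 + z ^ 2) * |log (s ^ 2 + z ^ 2)|) ≤ f s ^ 2 ∧
      f s ^ 2 ≤ δ / ((s ^ 2 + z ^ 2) * |log (s ^ 2 + z ^ 2)|)) :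
    δ' * ((log |log (z ^ 2)| - log |log (r ^ 2 + z ^ 2)|) / 2)
        ≤ ∫ t in Ioo 0 r, f t ^ 2 * t ∧
      ∫ t in Ioo 0 r, f t ^ 2 * t
        ≤ δ * ((log |log (z ^ 2)| - log |log (r ^ 2 + z ^ 2)|) / 2) := by
  rw [← integral_div_mul_abs_log_sq_add_sq hr hz h1]
  have hw : IntegrableOn (fun t => t / ((t ^ 2 + z ^ 2) * |log (t ^ 2 + z ^ 2)|)) (Ioo 0 r) :=
    ((continuousOn_div_mul_abs_log_sq_add_sq fun t ht =>
      sq_add_sq_mem_Ioo_of_mem_Icc hz h1 ht).integrableOn_Icc).mono_set Ioo_subset_Icc_self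
  refine setIntegral_bounds_of_mul_le_of_le_mul measurableSet_Ioo hw
    ((hf.pow_const 2).mul measurable_id).aestronglyMeasurable (fun t ht => ?_) (fun t ht => ?_)
  · rw [mul_div_left_comm, mul_comm t]
    exact mul_le_mul_of_nonneg_right (hbound t (Ioo_subset_Ioc_self ht)).1 ht.1.le
  · rw [mul_div_left_comm, mul_comm t]
    exact mul_le_mul_of_nonneg_right (hbound t (Ioo_subset_Ioc_self ht)).2 ht.1.le

theorem stmt12_general (r : ℝ) (hr : r ∈ Ioo (0:ℝ) (1/4))
    (g : ℝ → ℝ → ℝ) (hmeas : ∀ z, Measurable (g z))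
    (δ δ' : ℝ)
    (hbound : ∀ z ∈ Ioc (0:ℝ) r, ∀ s ∈ Ioc (0:ℝ) r,
      δ' / ((s ^ 2 + z ^ 2) * |Real.log (s ^ 2 + z ^ 2)|) ≤ (g z s) ^ 2 ∧
      (g z s) ^ 2 ≤ δ / ((s ^ 2 + z ^ 2) * |Real.log (s ^ 2 + z ^ 2)|)) :
    δ' / 2 ≤ Filter.liminf
        (fun z => (∫ t in Ioo (0:ℝ) r, (g z t) ^ 2 * t) / abs (Real.log (abs (Real.log (z ^ 2)))))
        (nhdsWithin 0 (Ioi 0)) ∧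
    Filter.limsup
        (fun z => (∫ t in Ioo (0:ℝ) r, (g z t) ^ 2 * t) / abs (Real.log (abs (Real.log (z ^ 2)))))
        (nhdsWithin 0 (Ioi 0)) ≤ δ / 2 := by
  obtain ⟨hr0, hr4⟩ := hr
  set q : ℝ → ℝ := fun z =>
    (log |log (z ^ 2)| - log |log (r ^ 2 + z ^ 2)|) / 2 / abs (log |log (z ^ 2)|)
  have hq : Tendsto q (nhdsWithin 0 (Ioi 0)) (nhds (1 / 2)) := by
    have := (tendsto_log_abs_log_sq_nhdsGT_zero.sub_div_abs_of_tendsto_atTop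
      (tendsto_log_abs_log_sq_add_sq_nhdsGT_zero hr0 (by linarith))).div_const 2
    simpa only [q, div_right_comm] using this
  have hsandwich : ∀ᶠ z in nhdsWithin 0 (Ioi 0),
      δ' * q z ≤ (∫ t in Ioo 0 r, g z t ^ 2 * t) / abs (log |log (z ^ 2)|) ∧
      (∫ t in Ioo 0 r, g z t ^ 2 * t) / abs (log |log (z ^ 2)|) ≤ δ * q z := by
    filter_upwards [Ioc_mem_nhdsGT hr0] with z hz
    obtain ⟨hlo, hhi⟩ := integral_sq_mul_bounds_of_sq_bounds hr0.le hz.1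
      (by nlinarith [hz.1, hz.2]) (hmeas z) (hbound z hz)
    exact ⟨(mul_div_assoc _ _ _).symm.trans_le (div_le_div_of_nonneg_right hlo (abs_nonneg _)),
      (div_le_div_of_nonneg_right hhi (abs_nonneg _)).trans_eq (mul_div_assoc _ _ _)⟩
  rw [← mul_one_div δ' 2, ← mul_one_div δ 2]
  exact le_liminf_and_limsup_le_of_tendsto (hq.const_mul δ') (hq.const_mul δ)
    (hsandwich.mono fun _ h => h.1) (hsandwich.mono fun _ h => h.2)

/-- If `g_z` satisfies the two-sided bound
`δ'/((s²+z²)|ln(s²+z²)|) ≤ g_z(s)² ≤ δ/((s²+z²)|ln(s²+z²)|)` for `s, z ∈ (0, r]`,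
and `ξ_z(r) = ∫₀^r g_z(t)² t dt`, then
`δ'/2 ≤ liminf_{z→0⁺} ξ_z(r)/|ln|ln z²||` and `limsup_{z→0⁺} ξ_z(r)/|ln|ln z²|| ≤ δ/2`. -/
theorem stmt12 (r : ℝ) (hr : r ∈ Ioo (0:ℝ) (1/4))
    (g : ℝ → ℝ → ℝ) (hmeas : ∀ z, Measurable (g z))
    (δ δ' : ℝ) (hδ' : 0 < δ') (hδ : δ' ≤ δ)
    (hbound : ∀ z ∈ Ioc (0:ℝ) r, ∀ s ∈ Ioc (0:ℝ) r,
      δ' / ((s ^ 2 + z ^ 2) * |Real.log (s ^ 2 + z ^ 2)|) ≤ (g z s) ^ 2 ∧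
      (g z s) ^ 2 ≤ δ / ((s ^ 2 + z ^ 2) * |Real.log (s ^ 2 + z ^ 2)|)) :
    δ' / 2 ≤ Filter.liminf
        (fun z => (∫ t in Ioo (0:ℝ) r, (g z t) ^ 2 * t) / abs (Real.log (abs (Real.log (z ^ 2)))))
        (nhdsWithin 0 (Ioi 0)) ∧
    Filter.limsup
        (fun z => (∫ t in Ioo (0:ℝ) r, (g z t) ^ 2 * t) / abs (Real.log (abs (Real.log (z ^ 2)))))
        (nhdsWithin 0 (Ioi 0)) ≤ δ / 2 :=
  stmt12_general r hr g hmeas δ δ' hbound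
end

section
/- Let H be a separable Hilbert space and let K, T : (0, z₀) → compact self-adjoint operators on H. Suppose that for every ε > 0 there are z₁ > 0, k ∈ ℕ, and decompositions K(z) − T(z) = B_ε(z) + P_ε(z) with self-adjoint B_ε(z), P_ε(z), sup_{z<z₁} ‖B_ε(z)‖ < ε, and rank P_ε(z) ≤ k. Suppose further that ξ(z) → ∞ as z → 0 and lim_{z→0} ξ(z)^{−1} n(T(z), a) = 1/(πa) for every a > 0. Then lim_{z→0} ξ(z)^{−1} n(K(z), a) = 1/(πa) for every a > 0. -/
open TopologicalSpace Set Real Filter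

/-!
For a compact self-adjoint `A` and `a > 0`, let `V` be the span of the eigenspaces of `A` for
eigenvalues `> a`. Then `V` is finite-dimensional, the quadratic form of `A` is `≥ a` on `V`
and `≤ a` on `Vᗮ`: the restriction of `A` to `Vᗮ` is compact self-adjoint without eigenvalues
above `a`, so its spectrum lies below `a`. Hence, if `‖A' - A - P‖ < ε`, no nonzero vector of the
eigenspaces of `A'` above `a + ε` is orthogonal to `V ⊔ range P`, which is the Weyl-type bound
`n(A', a + ε) ≤ n(A, a) + rank P`. Used in both directions it gives
`n(T(z), a + ε) - k ≤ n(K(z), a) ≤ n(T(z), a - ε) + k`; after division by `ξ(z) → ∞` the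
constant `k` disappears, and `ε → 0` gives the limit by continuity of `b ↦ 1 / (π b)`.
-/

open RCLike Module Module.End Topology
open scoped InnerProductSpace

theorem re_inner_apply_self_le_opNorm_mul {𝕜 F : Type*} [RCLike 𝕜] [NormedAddCommGroup F]
    [InnerProductSpace 𝕜 F] (T : F →L[𝕜] F) (x : F) : re ⟪T x, x⟫_𝕜 ≤ ‖T‖ * ‖x‖ ^ 2 :=
  calc re ⟪T x, x⟫_𝕜 ≤ ‖T x‖ * ‖x‖ := re_inner_le_norm _ _
    _ ≤ ‖T‖ * ‖x‖ * ‖x‖ := by gcongr; exact T.le_opNorm x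
    _ = ‖T‖ * ‖x‖ ^ 2 := by ring

theorem finrank_le_finrank_of_disjoint_orthogonal {𝕜 F : Type*} [RCLike 𝕜]
    [NormedAddCommGroup F] [InnerProductSpace 𝕜 F] {U V : Submodule 𝕜 F} [FiniteDimensional 𝕜 V]
    (h : Disjoint U Vᗮ) : finrank 𝕜 U ≤ finrank 𝕜 V := by
  refine LinearMap.finrank_le_finrank_of_injective
    (f := V.orthogonalProjectionOnto.toLinearMap ∘ₗ U.subtype) ?_
  refine LinearMap.ker_eq_bot.mp (LinearMap.ker_eq_bot'.mpr fun x hx => ?_)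
  have hx' : (x : F) ∈ Vᗮ := Submodule.orthogonalProjectionOnto_eq_zero_iff.mp hx
  exact Subtype.ext (Submodule.disjoint_def.mp h _ x.2 hx')

theorem tendsto_div_of_sandwich {l : Filter ℝ} {ξ : ℝ → ℝ} (hξ : Tendsto ξ l atTop)
    {n : ℝ → ℝ} {N : ℝ → ℝ → ℝ} {f : ℝ → ℝ} {a : ℝ} (hf : ContinuousAt f a)
    (hN : ∀ᶠ b in 𝓝 a, Tendsto (fun z => N z b / ξ z) l (𝓝 (f b)))
    (hsandwich : ∀ᶠ ε in 𝓝[>] 0, ∃ k : ℝ,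
      ∀ᶠ z in l, n z ≤ N z (a - ε) + k ∧ N z (a + ε) ≤ n z + k) :
    Tendsto (fun z => n z / ξ z) l (𝓝 (f a)) := by
  have hξk : ∀ k c : ℝ, 0 < c → ∀ᶠ z in l, 0 < ξ z ∧ k < c * ξ z := fun k c hc =>
    (hξ.eventually_gt_atTop 0).and ((hξ.const_mul_atTop hc).eventually_gt_atTop k)
  refine tendsto_order.mpr ⟨fun c hc => ?_, fun c hc => ?_⟩
  · have hright : Tendsto (fun ε => a + ε) (𝓝[>] 0) (𝓝 a) :=
      ((continuous_const.add continuous_id).tendsto' 0 a (add_zero a)).mono_left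
        nhdsWithin_le_nhds
    obtain ⟨ε, ⟨hcf, hNε⟩, k, hk⟩ :=
      ((hright.eventually ((hf.eventually (lt_mem_nhds hc)).and hN)).and hsandwich).exists
    obtain ⟨d, hcd, hdf⟩ := exists_between hcf
    filter_upwards [hNε.eventually (lt_mem_nhds hdf), hk, hξk k (d - c) (sub_pos.mpr hcd)]
      with z hdN hnN hξz
    rw [lt_div_iff₀ hξz.1] at hdN ⊢
    linarith [hnN.2]
  · have hleft : Tendsto (fun ε => a - ε) (𝓝[>] 0) (𝓝 a) :=
      ((continuous_const.sub continuous_id).tendsto' 0 a (sub_zero a)).mono_left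
        nhdsWithin_le_nhds
    obtain ⟨ε, ⟨hcf, hNε⟩, k, hk⟩ :=
      ((hleft.eventually ((hf.eventually (gt_mem_nhds hc)).and hN)).and hsandwich).exists
    obtain ⟨d, hfd, hdc⟩ := exists_between hcf
    filter_upwards [hNε.eventually (gt_mem_nhds hfd), hk, hξk k (c - d) (sub_pos.mpr hdc)]
      with z hdN hnN hξz
    rw [div_lt_iff₀ hξz.1] at hdN ⊢
    linarith [hnN.1]

section EigenvalueCounting

variable {E : Type*} [NormedAddCommGroup E] [InnerProductSpace ℂ E]

theorem re_inner_le_of_forall_not_hasEigenvalue [CompleteSpace E] {S : E →L[ℂ] E}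
    (hS : IsSelfAdjoint S) (hSc : IsCompactOperator S) {a : ℝ} (ha : 0 ≤ a)
    (h : ∀ μ : ℝ, a < μ → ¬HasEigenvalue (S : E →ₗ[ℂ] E) μ) (x : E) :
    re ⟪S x, x⟫_ℂ ≤ a * ‖x‖ ^ 2 := by
  -- Nonzero spectral values of a compact operator are eigenvalues; then `S ≤ a` by the CFC.
  have hspec : ∀ μ ∈ spectrum ℝ S, μ ≤ a := by
    intro μ hμ
    by_contra! hμa
    rw [← spectrum.algebraMap_mem_iff ℂ, ← hSc.hasEigenvalue_iff_mem_spectrum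
      (by simpa using (ha.trans_lt hμa).ne')] at hμ
    exact h μ hμa hμ
  have hpos := (le_algebraMap_of_spectrum_le hspec hS).re_inner_nonneg_right x
  have hexp : re ⟪x, (algebraMap ℝ (E →L[ℂ] E) a - S) x⟫_ℂ = a * ‖x‖ ^ 2 - re ⟪S x, x⟫_ℂ := by
    rw [sub_apply, inner_sub_right, map_sub, inner_re_symm (S x), Algebra.algebraMap_eq_smul_one,
      smul_apply, one_apply_eq_self, inner_smul_right_eq_smul, smul_re, inner_self_eq_norm_sq]
  linarith

noncomputable def eigenspacesGT (A : E →L[ℂ] E) (a : ℝ) : Submodule ℂ E :=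
  ⨆ μ : {μ : ℝ // a < μ}, eigenspace (A : E →ₗ[ℂ] E) ((μ : ℝ) : ℂ)

variable {A : E →L[ℂ] E} {a : ℝ}

theorem le_re_inner_of_mem_eigenspacesGT (hA : (A : E →ₗ[ℂ] E).IsSymmetric) {x : E}
    (hx : x ∈ eigenspacesGT A a) : a * ‖x‖ ^ 2 ≤ re ⟪A x, x⟫_ℂ := by
  obtain ⟨f, hf, rfl⟩ := (Submodule.mem_iSup_iff_exists_finsupp _ _).mp hx
  have horth : OrthogonalFamily ℂ
      (fun μ : {μ : ℝ // a < μ} => eigenspace (A : E →ₗ[ℂ] E) ((μ : ℝ) : ℂ))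
      (fun μ => (eigenspace (A : E →ₗ[ℂ] E) ((μ : ℝ) : ℂ)).subtypeₗᵢ) :=
    hA.orthogonalFamily_eigenspaces.comp fun μ ν h => Subtype.ext (Complex.ofReal_injective h)
  let v : ∀ μ : {μ : ℝ // a < μ}, eigenspace (A : E →ₗ[ℂ] E) ((μ : ℝ) : ℂ) :=
    fun μ => ⟨f μ, hf μ⟩
  have hinner : ⟪∑ μ ∈ f.support, ((μ : ℝ) : ℂ) • f μ, ∑ μ ∈ f.support, f μ⟫_ℂ
      = ∑ μ ∈ f.support, ⟪((μ : ℝ) : ℂ) • f μ, f μ⟫_ℂ :=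
    horth.inner_sum (fun μ => ((μ : ℝ) : ℂ) • v μ) v f.support
  have hnorm : ‖∑ μ ∈ f.support, f μ‖ ^ 2 = ∑ μ ∈ f.support, ‖f μ‖ ^ 2 :=
    horth.norm_sum v f.support
  have hAf : ∀ μ, A (f μ) = ((μ : ℝ) : ℂ) • f μ := fun μ => mem_eigenspace_iff.mp (hf μ)
  simp only [Finsupp.sum, map_sum, hAf]
  rw [hinner, hnorm, map_sum, Finset.mul_sum]
  refine Finset.sum_le_sum fun μ _ => ?_
  rw [inner_smul_left, Complex.conj_ofReal, inner_self_eq_norm_sq_to_K]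
  simp only [← ofReal_pow, re_mul_ofReal, re_to_complex, Complex.ofReal_re]
  exact mul_le_mul_of_nonneg_right μ.2.le (sq_nonneg _)

theorem mul_norm_le_norm_apply_of_mem_eigenspacesGT (hA : (A : E →ₗ[ℂ] E).IsSymmetric) {x : E}
    (hx : x ∈ eigenspacesGT A a) : a * ‖x‖ ≤ ‖A x‖ := by
  rcases (norm_nonneg x).eq_or_lt with hx0 | hx0
  · simp [← hx0]
  refine le_of_mul_le_mul_right ?_ hx0
  calc a * ‖x‖ * ‖x‖ = a * ‖x‖ ^ 2 := by ring
    _ ≤ re ⟪A x, x⟫_ℂ := le_re_inner_of_mem_eigenspacesGT hA hx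
    _ ≤ ‖A x‖ * ‖x‖ := re_inner_le_norm _ _

theorem eigenspacesGT_le_map (ha : 0 ≤ a) :
    eigenspacesGT A a ≤ (eigenspacesGT A a).map (A : E →ₗ[ℂ] E) := by
  refine iSup_le fun μ x hx => ⟨((μ : ℝ) : ℂ)⁻¹ • x, ?_, ?_⟩
  · exact le_iSup (fun ν : {μ : ℝ // a < μ} => eigenspace (A : E →ₗ[ℂ] E) ((ν : ℝ) : ℂ)) μ
      (Submodule.smul_mem _ _ hx)
  · have hμ : ((μ : ℝ) : ℂ) ≠ 0 := by exact_mod_cast (ha.trans_lt μ.2).ne'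
    rw [map_smul, mem_eigenspace_iff.mp hx, inv_smul_smul₀ hμ]

theorem finiteDimensional_eigenspacesGT (hA : (A : E →ₗ[ℂ] E).IsSymmetric)
    (hAc : IsCompactOperator A) (ha : 0 < a) : FiniteDimensional ℂ (eigenspacesGT A a) := by
  -- Riesz: the unit ball of the subspace lies in the relatively compact `A '' closedBall 0 a⁻¹`.
  refine FiniteDimensional.of_totallyBounded_nhds_zero ℂ (Metric.ball_mem_nhds 0 one_pos) ?_
  rw [← totallyBounded_image_iff isUniformEmbedding_subtype_val.isUniformInducing]
  refine (hAc.isCompact_closure_image_closedBall a⁻¹).totallyBounded.subset ?_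
  rintro _ ⟨x, hx, rfl⟩
  obtain ⟨y, hy, hyx⟩ := eigenspacesGT_le_map ha.le x.2
  refine subset_closure ⟨y, ?_, hyx⟩
  have hAy := mul_norm_le_norm_apply_of_mem_eigenspacesGT hA hy
  rw [ContinuousLinearMap.coe_coe] at hyx
  rw [hyx] at hAy
  rw [mem_closedBall_zero_iff, ← mul_one a⁻¹, le_inv_mul_iff₀ ha]
  have hxn : ‖(x : E)‖ < 1 := mem_ball_zero_iff.mp hx
  linarith

theorem orthogonal_eigenspacesGT_invariant (hA : (A : E →ₗ[ℂ] E).IsSymmetric) {x : E}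
    (hx : x ∈ (eigenspacesGT A a)ᗮ) : A x ∈ (eigenspacesGT A a)ᗮ := by
  rw [eigenspacesGT, ← Submodule.iInf_orthogonal] at hx ⊢
  exact (A : E →ₗ[ℂ] E).iInf_invariant
    (fun μ : {μ : ℝ // a < μ} => hA.invariant_orthogonalComplement_eigenspace ((μ : ℝ) : ℂ)) x hx

theorem re_inner_le_of_mem_orthogonal_eigenspacesGT [CompleteSpace E] (hA : IsSelfAdjoint A)
    (hAc : IsCompactOperator A) (ha : 0 ≤ a) {x : E} (hx : x ∈ (eigenspacesGT A a)ᗮ) :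
    re ⟪A x, x⟫_ℂ ≤ a * ‖x‖ ^ 2 := by
  have hAs := A.isSelfAdjoint_iff_isSymmetric.mp hA
  set W := (eigenspacesGT A a)ᗮ
  have : CompleteSpace W := (Submodule.isClosed_orthogonal _).completeSpace_coe
  have hinv : ∀ y ∈ W, A y ∈ W := fun y hy => orthogonal_eigenspacesGT_invariant hAs hy
  refine re_inner_le_of_forall_not_hasEigenvalue
    ((A.restrict hinv).isSelfAdjoint_iff_isSymmetric.mpr (hAs.restrict_invariant hinv))
    (hAc.restrict' hinv) ha (fun μ hμ => ?_) ⟨x, hx⟩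
  refine hasEigenvalue_iff.not_left.mpr (eigenspace_restrict_eq_bot hinv ?_)
  exact (Submodule.orthogonal_disjoint _).mono_left (le_iSup_of_le ⟨μ, hμ⟩ le_rfl)

theorem nEig_le_nEig_add_finrank_range [CompleteSpace E] {A' P : E →L[ℂ] E}
    (hA : IsSelfAdjoint A) (hAc : IsCompactOperator A) (hA' : IsSelfAdjoint A')
    [FiniteDimensional ℂ (LinearMap.range (P : E →ₗ[ℂ] E))] {ε : ℝ} (ha : 0 < a)
    (hε : ‖A' - A - P‖ < ε) :
    nEig A' (a + ε) ≤ nEig A a + finrank ℂ (LinearMap.range (P : E →ₗ[ℂ] E)) := by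
  have := finiteDimensional_eigenspacesGT (A.isSelfAdjoint_iff_isSymmetric.mp hA) hAc ha
  set R := LinearMap.range (P : E →ₗ[ℂ] E)
  calc nEig A' (a + ε) ≤ finrank ℂ (eigenspacesGT A a ⊔ R : Submodule ℂ E) := by
        refine finrank_le_finrank_of_disjoint_orthogonal (Submodule.disjoint_def.mpr ?_)
        intro x hx' hx
        have hxV : x ∈ (eigenspacesGT A a)ᗮ := Submodule.orthogonal_le le_sup_left hx
        have hxR : x ∈ Rᗮ := Submodule.orthogonal_le le_sup_right hx
        have hlow : (a + ε) * ‖x‖ ^ 2 ≤ re ⟪A' x, x⟫_ℂ :=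
          le_re_inner_of_mem_eigenspacesGT (A'.isSelfAdjoint_iff_isSymmetric.mp hA') hx'
        have hup : re ⟪A x, x⟫_ℂ ≤ a * ‖x‖ ^ 2 :=
          re_inner_le_of_mem_orthogonal_eigenspacesGT hA hAc ha.le hxV
        have hsmall := re_inner_apply_self_le_opNorm_mul (A' - A - P) x
        have hP : ⟪P x, x⟫_ℂ = 0 :=
          Submodule.inner_right_of_mem_orthogonal (LinearMap.mem_range_self _ x) hxR
        have hsplit : re ⟪A' x, x⟫_ℂ
            = re ⟪A x, x⟫_ℂ + re ⟪(A' - A - P) x, x⟫_ℂ + re ⟪P x, x⟫_ℂ := by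
          simp only [sub_apply, inner_sub_left, map_sub]
          ring
        rw [hP, map_zero] at hsplit
        by_contra hx0
        have := pow_pos (norm_pos_iff.mpr hx0) 2
        nlinarith
    _ ≤ nEig A a + finrank ℂ R := Submodule.finrank_add_le_finrank_add_finrank _ _

theorem nEig_sandwich_of_sub_eq_add [CompleteSpace E] {A' B P : E →L[ℂ] E}
    (hA : IsSelfAdjoint A) (hAc : IsCompactOperator A) (hA' : IsSelfAdjoint A')
    (hA'c : IsCompactOperator A') (hdiff : A' - A = B + P) {ε : ℝ} (hεa : ε < a)
    (hB : ‖B‖ < ε) {k : ℕ} (hPfin : FiniteDimensional ℂ (LinearMap.range (P : E →ₗ[ℂ] E)))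
    (hPk : finrank ℂ (LinearMap.range (P : E →ₗ[ℂ] E)) ≤ k) :
    nEig A' a ≤ nEig A (a - ε) + k ∧ nEig A (a + ε) ≤ nEig A' a + k := by
  have hrange : LinearMap.range ((-P : E →L[ℂ] E) : E →ₗ[ℂ] E)
      = LinearMap.range (P : E →ₗ[ℂ] E) := by
    rw [ContinuousLinearMap.toLinearMap_neg, LinearMap.range_neg]
  have : FiniteDimensional ℂ (LinearMap.range ((-P : E →L[ℂ] E) : E →ₗ[ℂ] E)) := hrange ▸ hPfin
  constructor
  · have h := nEig_le_nEig_add_finrank_range hA hAc hA' (a := a - ε) (by linarith)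
      (by rwa [hdiff, add_sub_cancel_right])
    rw [sub_add_cancel] at h
    omega
  · have h := nEig_le_nEig_add_finrank_range hA' hA'c hA (P := -P) (a := a)
      (by linarith [norm_nonneg B])
      (by rwa [sub_neg_eq_add, ← neg_sub, hdiff, neg_add, neg_add_cancel_right, norm_neg])
    rw [hrange] at h
    omega

end EigenvalueCounting

theorem stmt17_general {H : Type*} [NormedAddCommGroup H] [InnerProductSpace ℂ H]
    [CompleteSpace H]
    (z₀ : ℝ) (hz₀ : 0 < z₀) (K T : ℝ → (H →L[ℂ] H))
    (hKc : ∀ z ∈ Ioo 0 z₀, IsCompactOperator (K z))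
    (hKs : ∀ z ∈ Ioo 0 z₀, IsSelfAdjoint (K z))
    (hTc : ∀ z ∈ Ioo 0 z₀, IsCompactOperator (T z))
    (hTs : ∀ z ∈ Ioo 0 z₀, IsSelfAdjoint (T z))
    (hdec : ∀ ε : ℝ, 0 < ε → ∃ z₁ : ℝ, 0 < z₁ ∧ ∃ k : ℕ,
      ∃ B P : ℝ → (H →L[ℂ] H), ∀ z ∈ Ioo 0 (min z₁ z₀),
        K z - T z = B z + P z ∧ IsSelfAdjoint (B z) ∧ IsSelfAdjoint (P z) ∧
        ‖B z‖ < ε ∧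
        Module.Finite ℂ (LinearMap.range ((P z) : H →ₗ[ℂ] H)) ∧
        Module.finrank ℂ (LinearMap.range ((P z) : H →ₗ[ℂ] H)) ≤ k)
    (ξ : ℝ → ℝ) (hξ : Tendsto ξ (nhdsWithin 0 (Ioi 0)) atTop)
    (hT : ∀ a : ℝ, 0 < a →
      Tendsto (fun z => (nEig (T z) a : ℝ) / ξ z) (nhdsWithin 0 (Ioi 0))
        (nhds (1 / (π * a)))) :
    ∀ a : ℝ, 0 < a →
      Tendsto (fun z => (nEig (K z) a : ℝ) / ξ z) (nhdsWithin 0 (Ioi 0))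
        (nhds (1 / (π * a))) := by
  intro a ha
  have hcont : ContinuousAt (fun b : ℝ => 1 / (π * b)) a :=
    continuousAt_const.div (continuousAt_const.mul continuousAt_id) (by positivity)
  refine tendsto_div_of_sandwich (f := fun b => 1 / (π * b)) hξ hcont
    ((eventually_gt_nhds ha).mono hT) ?_
  filter_upwards [Ioo_mem_nhdsGT ha] with ε ⟨hε, hεa⟩
  obtain ⟨z₁, hz₁, k, B, P, hBP⟩ := hdec ε hε
  refine ⟨k, ?_⟩
  filter_upwards [Ioo_mem_nhdsGT (lt_min hz₁ hz₀)] with z hz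
  obtain ⟨hKT, -, -, hB, hPfin, hPk⟩ := hBP z hz
  have hz' : z ∈ Ioo 0 z₀ := ⟨hz.1, hz.2.trans_le (min_le_right _ _)⟩
  exact_mod_cast nEig_sandwich_of_sub_eq_add (hTs z hz') (hTc z hz') (hKs z hz') (hKc z hz')
    hKT hεa hB hPfin hPk

/-- If `K(z)` differs from `T(z)` by a small-norm self-adjoint part plus a uniformly
finite-rank self-adjoint part (for each `ε > 0`), `ξ(z) → ∞` as `z → 0⁺`, and
`ξ(z)⁻¹ n(T(z), a) → 1/(πa)` for every `a > 0`, then also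
`ξ(z)⁻¹ n(K(z), a) → 1/(πa)` for every `a > 0`. -/
theorem stmt17 {H : Type*} [NormedAddCommGroup H] [InnerProductSpace ℂ H]
    [CompleteSpace H] [SeparableSpace H]
    (z₀ : ℝ) (hz₀ : 0 < z₀) (K T : ℝ → (H →L[ℂ] H))
    (hKc : ∀ z ∈ Ioo 0 z₀, IsCompactOperator (K z))
    (hKs : ∀ z ∈ Ioo 0 z₀, IsSelfAdjoint (K z))
    (hTc : ∀ z ∈ Ioo 0 z₀, IsCompactOperator (T z))
    (hTs : ∀ z ∈ Ioo 0 z₀, IsSelfAdjoint (T z))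
    (hdec : ∀ ε : ℝ, 0 < ε → ∃ z₁ : ℝ, 0 < z₁ ∧ ∃ k : ℕ,
      ∃ B P : ℝ → (H →L[ℂ] H), ∀ z ∈ Ioo 0 (min z₁ z₀),
        K z - T z = B z + P z ∧ IsSelfAdjoint (B z) ∧ IsSelfAdjoint (P z) ∧
        ‖B z‖ < ε ∧
        Module.Finite ℂ (LinearMap.range ((P z) : H →ₗ[ℂ] H)) ∧
        Module.finrank ℂ (LinearMap.range ((P z) : H →ₗ[ℂ] H)) ≤ k)
    (ξ : ℝ → ℝ) (hξ : Tendsto ξ (nhdsWithin 0 (Ioi 0)) atTop)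
    (hT : ∀ a : ℝ, 0 < a →
      Tendsto (fun z => (nEig (T z) a : ℝ) / ξ z) (nhdsWithin 0 (Ioi 0))
        (nhds (1 / (π * a)))) :
    ∀ a : ℝ, 0 < a →
      Tendsto (fun z => (nEig (K z) a : ℝ) / ξ z) (nhdsWithin 0 (Ioi 0))
        (nhds (1 / (π * a))) :=
  stmt17_general z₀ hz₀ K T hKc hKs hTc hTs hdec ξ hξ hT
end
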